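/- With u_b(r) the unique root of K(·;r) in (6/5, 4/3) for r > 2/3, the functions r ↦ μ_0(r, u_b(r)) and r ↦ D_0(r, u_b(r)) satisfy: μ_0(r, u_b(r)) → (3√115 − 65)/66 as r → (2/3)⁺, μ_0(r, u_b(r)) → −8/5 as r → ∞, D_0(r, u_b(r)) → (10/363)·(34 + 3√115) as r → (2/3)⁺, and D_0(r, u_b(r)) → 0 as r → ∞. -/

import Mathlib

/-!
Set `w = 1/(r + 1/10)`. Then `r/(r + 1/10) = 1 - w/10` and
`(r + u - 2)/(r + 1/10) = 1 + (u - 21/10) w`, so `μ_0` and `D_0` are continuous functions of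
`(w, u)` wherever the common denominator `3√(1 + (u - 21/10) w) + 3√(1 - w/10) - 2` does not
vanish. As `r → (2/3)⁺` we have `(w, u_b) → (30/23, 4/3)`, and as `r → ∞` we have
`(w, u_b) → (0, 6/5)`: since `K` is affine in `r`,
`K(u;r) = 10(5u - 6)(2 - u) r + (40u³ - 169u² + 224u - 96)`, a root in `(6/5, 4/3)` satisfies
`2 - r ≤ u ≤ 6/5 + 9/(100 r)`. The four limits are the values of the two continuous functions
there.
-/

open Filter Topology

noncomputable section

/-- The cubic `K(u;r)`. -/
def Kc (u r : ℝ) : ℝ := 40*u^3 - (50*r + 169)*u^2 + (160*r + 224)*u - 120*r - 96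

/-- `q_{f,+}(r) = 1 + √(r/(r + 1/10))`. -/
def qfp (r : ℝ) : ℝ := 1 + Real.sqrt (r / (r + 1/10))

/-- `q_{f,−}(r) = 1 − √(r/(r + 1/10))`. -/
def qfm (r : ℝ) : ℝ := 1 - Real.sqrt (r / (r + 1/10))

/-- `q_{b,+}(r,u) = 1 + √((r + u − 2)/(r + 1/10))`. -/
def qbp (r u : ℝ) : ℝ := 1 + Real.sqrt ((r + u - 2) / (r + 1/10))

/-- `q_{b,−}(r,u) = 1 − √((r + u − 2)/(r + 1/10))`. -/
def qbm (r u : ℝ) : ℝ := 1 - Real.sqrt ((r + u - 2) / (r + 1/10))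

/-- The singular wave-speed parameter `μ_0(r,u)`. -/
def mu0 (r u : ℝ) : ℝ :=
  (2*(2*qbm r u - qbp r u) + u*(2*qfm r - qfp r)) /
    (qbp r u - 2*qbm r u + qfp r - 2*qfm r)

/-- The singular diffusion coefficient `D_0(r,u)`. -/
def D0 (r u : ℝ) : ℝ :=
  2*(2 - u)^2 / ((r + 1/10) * (2*qbm r u - qbp r u + 2*qfm r - qfp r)^2)

def mu0W (w u : ℝ) : ℝ :=
  (2 * (1 - 3 * √(1 + (u - 21/10) * w)) + u * (1 - 3 * √(1 - w/10))) /
    (3 * √(1 + (u - 21/10) * w) + 3 * √(1 - w/10) - 2)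

def D0W (w u : ℝ) : ℝ :=
  2 * (2 - u)^2 * w / (2 - 3 * √(1 + (u - 21/10) * w) - 3 * √(1 - w/10))^2

lemma div_add_tenth_eq {r : ℝ} (hr : r + 1/10 ≠ 0) :
    r / (r + 1/10) = 1 - (r + 1/10)⁻¹ / 10 := by
  rw [div_eq_mul_inv]; linear_combination inv_mul_cancel₀ hr

lemma add_sub_two_div_add_tenth_eq {r : ℝ} (u : ℝ) (hr : r + 1/10 ≠ 0) :
    (r + u - 2) / (r + 1/10) = 1 + (u - 21/10) * (r + 1/10)⁻¹ := by
  rw [div_eq_mul_inv]; linear_combination inv_mul_cancel₀ hr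

lemma mu0_eq_mu0W {r : ℝ} (u : ℝ) (hr : r + 1/10 ≠ 0) : mu0 r u = mu0W (r + 1/10)⁻¹ u := by
  rw [mu0W, ← div_add_tenth_eq hr, ← add_sub_two_div_add_tenth_eq u hr]
  simp only [mu0, qbp, qbm, qfp, qfm]
  congr 1 <;> ring

lemma D0_eq_D0W {r : ℝ} (u : ℝ) (hr : r + 1/10 ≠ 0) : D0 r u = D0W (r + 1/10)⁻¹ u := by
  rw [D0W, ← div_add_tenth_eq hr, ← add_sub_two_div_add_tenth_eq u hr]
  simp only [D0, qbp, qbm, qfp, qfm]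
  rw [mul_comm (r + 1/10), ← div_div]
  ring

lemma continuousAt_mu0W {w u : ℝ} (h : 3 * √(1 + (u - 21/10) * w) + 3 * √(1 - w/10) ≠ 2) :
    ContinuousAt (fun p : ℝ × ℝ => mu0W p.1 p.2) (w, u) := by
  unfold mu0W
  exact ContinuousAt.div (by fun_prop) (by fun_prop) (sub_ne_zero.2 h)

lemma continuousAt_D0W {w u : ℝ} (h : 3 * √(1 + (u - 21/10) * w) + 3 * √(1 - w/10) ≠ 2) :
    ContinuousAt (fun p : ℝ × ℝ => D0W p.1 p.2) (w, u) := by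
  unfold D0W
  refine ContinuousAt.div (by fun_prop) (by fun_prop) (pow_ne_zero _ ?_)
  intro h0; exact h (by linarith)

lemma two_sub_le_of_Kc_eq_zero {u r : ℝ} (hu : u ∈ Set.Ioo (6/5 : ℝ) (4/3)) (hr : 2/3 < r)
    (hK : Kc u r = 0) : 2 - r ≤ u := by
  obtain ⟨h1, h2⟩ := hu
  have hA : 0 ≤ (4/3 - u)^2 * (287/120 - u) := mul_nonneg (sq_nonneg _) (by linarith)
  have hB : 0 ≤ (4/3 - u) * (r - 2/3) * (280/3 - 50*u) :=
    mul_nonneg (mul_nonneg (by linarith) (by linarith)) (by linarith)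
  unfold Kc at hK
  nlinarith

lemma le_of_Kc_eq_zero {u r : ℝ} (hu : u ∈ Set.Ioo (6/5 : ℝ) (4/3)) (hr : 0 < r)
    (hK : Kc u r = 0) : u ≤ 6/5 + 9/100 * r⁻¹ := by
  obtain ⟨h1, h2⟩ := hu
  have hP : 0 ≤ 40*u^3 - 169*u^2 + 224*u - 93 := by
    have h12 : 0 ≤ (u - 6/5) * (4/3 - u) := mul_nonneg (by linarith) (by linarith)
    nlinarith [mul_nonneg h12 (sub_nonneg.2 h2.le), sq_nonneg (u - 4/3)]
  have hA : 0 ≤ 10*r*(5*u - 6)*(4/3 - u) :=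
    mul_nonneg (mul_nonneg (by linarith) (by linarith)) (by linarith)
  unfold Kc at hK
  have hm : 20*(r*(5*u - 6)) ≤ 9 := by nlinarith
  have : u - 6/5 ≤ 9/100 * r⁻¹ := by
    rw [← div_eq_mul_inv, le_div_iff₀ hr]; linarith
  linarith

lemma tendsto_root_nhdsGT {ub : ℝ → ℝ}
    (hub : ∀ r : ℝ, 2/3 < r → ub r ∈ Set.Ioo (6/5 : ℝ) (4/3) ∧ Kc (ub r) r = 0) :
    Tendsto ub (𝓝[>] (2/3)) (𝓝 (4/3)) := by
  have hlow : Tendsto (fun r : ℝ => 2 - r) (𝓝[>] (2/3)) (𝓝 (4/3)) := by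
    rw [show (4/3 : ℝ) = 2 - 2/3 by norm_num]
    exact ((continuous_const.sub continuous_id).tendsto _).mono_left nhdsWithin_le_nhds
  refine tendsto_of_tendsto_of_tendsto_of_le_of_le' hlow tendsto_const_nhds ?_ ?_
  all_goals filter_upwards [self_mem_nhdsWithin] with r hr
  · exact two_sub_le_of_Kc_eq_zero (hub r hr).1 hr (hub r hr).2
  · exact (hub r hr).1.2.le

lemma tendsto_root_atTop {ub : ℝ → ℝ}
    (hub : ∀ r : ℝ, 2/3 < r → ub r ∈ Set.Ioo (6/5 : ℝ) (4/3) ∧ Kc (ub r) r = 0) :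
    Tendsto ub atTop (𝓝 (6/5)) := by
  have hup : Tendsto (fun r : ℝ => 6/5 + 9/100 * r⁻¹) atTop (𝓝 (6/5)) := by
    simpa using tendsto_const_nhds.add (tendsto_inv_atTop_zero.const_mul (9/100 : ℝ))
  refine tendsto_of_tendsto_of_tendsto_of_le_of_le' tendsto_const_nhds hup ?_ ?_
  all_goals filter_upwards [eventually_gt_atTop (2/3 : ℝ)] with r hr
  · exact (hub r hr).1.1.le
  · exact le_of_Kc_eq_zero (hub r hr).1 (by linarith) (hub r hr).2

lemma tendsto_inv_add_tenth_nhdsGT :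
    Tendsto (fun r : ℝ => (r + 1/10)⁻¹) (𝓝[>] (2/3)) (𝓝 (30/23)) := by
  have : ContinuousAt (fun r : ℝ => (r + 1/10)⁻¹) (2/3) := by fun_prop (disch := norm_num)
  rw [show (30/23 : ℝ) = (2/3 + 1/10)⁻¹ by norm_num]
  exact this.tendsto.mono_left nhdsWithin_le_nhds

lemma tendsto_inv_add_tenth_atTop : Tendsto (fun r : ℝ => (r + 1/10)⁻¹) atTop (𝓝 0) :=
  tendsto_inv_atTop_zero.comp (tendsto_atTop_add_const_right _ _ tendsto_id)

lemma tendsto_mu0_D0 {l : Filter ℝ} {ub : ℝ → ℝ} {w u : ℝ}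
    (hl : ∀ᶠ r in l, r + 1/10 ≠ 0) (hw : Tendsto (fun r => (r + 1/10)⁻¹) l (𝓝 w))
    (hu : Tendsto ub l (𝓝 u)) (h : 3 * √(1 + (u - 21/10) * w) + 3 * √(1 - w/10) ≠ 2) :
    Tendsto (fun r => mu0 r (ub r)) l (𝓝 (mu0W w u)) ∧
      Tendsto (fun r => D0 r (ub r)) l (𝓝 (D0W w u)) := by
  have hp := hw.prodMk_nhds hu
  constructor
  · refine ((continuousAt_mu0W h).tendsto.comp hp).congr' ?_
    filter_upwards [hl] with r hr using (mu0_eq_mu0W _ hr).symm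
  · refine ((continuousAt_D0W h).tendsto.comp hp).congr' ?_
    filter_upwards [hl] with r hr using (D0_eq_D0W _ hr).symm

lemma mu0W_zero (u : ℝ) : mu0W 0 u = -(2 + u) / 2 := by
  norm_num [mu0W]; ring

lemma D0W_zero (u : ℝ) : D0W 0 u = 0 := by
  simp [D0W]

lemma sqrt_at_two_thirds :
    √(1 + (4/3 - 21/10) * (30/23 : ℝ)) = 0 ∧ √(1 - 30/23/10 : ℝ) = 2 * √115 / 23 := by
  refine ⟨by norm_num, ?_⟩
  rw [show (1 - 30/23/10 : ℝ) = (2/23)^2 * 115 by norm_num, Real.sqrt_mul (by positivity),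
    Real.sqrt_sq (by norm_num)]
  ring

lemma ten_lt_sqrt_115 : (10 : ℝ) < √115 := by
  rw [Real.lt_sqrt (by norm_num)]; norm_num

lemma ne_two_at_two_thirds :
    3 * √(1 + (4/3 - 21/10) * (30/23 : ℝ)) + 3 * √(1 - 30/23/10 : ℝ) ≠ 2 := by
  rw [sqrt_at_two_thirds.1, sqrt_at_two_thirds.2]
  linarith [ten_lt_sqrt_115]

lemma mu0W_at_two_thirds : mu0W (30/23) (4/3) = (3 * √115 - 65) / 66 := by
  have ht : √115 ^ 2 = 115 := Real.sq_sqrt (by norm_num)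
  have := ten_lt_sqrt_115
  rw [mu0W, sqrt_at_two_thirds.1, sqrt_at_two_thirds.2,
    div_eq_div_iff (by nlinarith) (by norm_num)]
  linear_combination (-18/23) * ht

lemma D0W_at_two_thirds : D0W (30/23) (4/3) = 10/363 * (34 + 3 * √115) := by
  have ht : √115 ^ 2 = 115 := Real.sq_sqrt (by norm_num)
  have := ten_lt_sqrt_115
  rw [D0W, sqrt_at_two_thirds.1, sqrt_at_two_thirds.2, div_eq_iff (by nlinarith)]
  linear_combination -(10/363) * (108 * √115 - 432) / 529 * ht

theorem stmt10 (ub : ℝ → ℝ)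
    (hub : ∀ r : ℝ, 2/3 < r → ub r ∈ Set.Ioo (6/5 : ℝ) (4/3) ∧ Kc (ub r) r = 0) :
    Tendsto (fun r => mu0 r (ub r)) (nhdsWithin (2/3) (Set.Ioi (2/3)))
      (nhds ((3 * Real.sqrt 115 - 65) / 66)) ∧
    Tendsto (fun r => mu0 r (ub r)) atTop (nhds (-8/5)) ∧
    Tendsto (fun r => D0 r (ub r)) (nhdsWithin (2/3) (Set.Ioi (2/3)))
      (nhds ((10/363) * (34 + 3 * Real.sqrt 115))) ∧
    Tendsto (fun r => D0 r (ub r)) atTop (nhds 0) := by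
  obtain ⟨hmu, hD⟩ := tendsto_mu0_D0
    (eventually_nhdsWithin_of_forall fun r (hr : 2/3 < r) => by positivity)
    tendsto_inv_add_tenth_nhdsGT (tendsto_root_nhdsGT hub) ne_two_at_two_thirds
  obtain ⟨hmu', hD'⟩ := tendsto_mu0_D0
    (eventually_gt_atTop 0 |>.mono fun r (hr : 0 < r) => by positivity)
    tendsto_inv_add_tenth_atTop (tendsto_root_atTop hub) (by norm_num)
  rw [mu0W_at_two_thirds] at hmu
  rw [D0W_at_two_thirds] at hD
  rw [mu0W_zero, show -(2 + 6/5 : ℝ) / 2 = -8/5 by norm_num] at hmu'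
  rw [D0W_zero] at hD'
  exact ⟨hmu, hmu', hD, hD'⟩
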